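/- arXiv:2407.15128 — 2 statements merged into one kernel-verified Lean document; each statement's English description precedes it below -/
import Mathlib

section
/- Let χ : g → t//W be the adjoint quotient (Chevalley) map for a reductive Lie algebra g over F̄_q with Frobenius F, restricted to F-fixed points χ : g^F → (t//W)^F. For z : (t//W)^F → ℂ define f_z = FT_g(χ*z) where FT_g is the Fourier transform attached to a G-invariant nondegenerate bilinear form defined over F_q. Then the assignment z ↦ f_z is an algebra isomorphism from ℂ[(t//W)^F] with pointwise multiplication onto the algebra C^{st}(g^F) of stable functions with convolution ⋆, where (f ⋆ f')(X) = |g^F|^{-1/2} ∑_Y f(X−Y)f'(Y). -/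
open scoped BigOperators

/-- Let `χ : g^F → (t//W)^F` be the (restriction to rational points
of the) Chevalley map of a finite reductive Lie algebra: abstractly, a surjection
from a finite-dimensional `F_q`-vector space `V = g^F`, carrying a nondegenerate
symmetric invariant form, onto the finite set `T = (t//W)^F`, whose fibers are
stable under negation.  A function `f` is stable iff `FT f` is constant on the
fibers of `χ`.  Then `z ↦ f_z := FT(χ*z)` is a unital algebra isomorphism from
`ℂ[T]` (pointwise product) onto the stable functions with convolution `⋆`. -/
theorem stmt7 {F V T : Type*} [Field F] [Fintype F] [AddCommGroup V] [Module F V]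
    [Fintype V] [DecidableEq V] [FiniteDimensional F V]
    (ψ : AddChar F ℂ) (hψ : ψ ≠ 1)
    (B : V →ₗ[F] V →ₗ[F] F)
    (hsymm : ∀ x y : V, B x y = B y x)
    (hnd : ∀ x : V, (∀ y : V, B x y = 0) → x = 0)
    (χ : V → T) (hχsurj : Function.Surjective χ)
    (hχneg : ∀ x y : V, χ x = χ y → χ (-x) = χ (-y))
    (FT : (V → ℂ) → (V → ℂ))
    (hFT : ∀ (f : V → ℂ) (X : V),
      FT f X = ((Real.sqrt (Fintype.card V) : ℝ) : ℂ)⁻¹ * ∑ Y : V, ψ (B X Y) * f Y)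
    (conv : (V → ℂ) → (V → ℂ) → (V → ℂ))
    (hconv : ∀ (f f' : V → ℂ) (X : V),
      conv f f' X = ((Real.sqrt (Fintype.card V) : ℝ) : ℂ)⁻¹ * ∑ Y : V, f (X - Y) * f' Y)
    (fz : (T → ℂ) → (V → ℂ))
    (hfz : ∀ z : T → ℂ, fz z = FT (fun X => z (χ X))) :
    -- each f_z is stable
    (∀ z : T → ℂ, ∀ x y : V, χ x = χ y → FT (fz z) x = FT (fz z) y) ∧
    -- z ↦ f_z is a bijection onto the stable functions
    (∀ f : V → ℂ, (∀ x y : V, χ x = χ y → FT f x = FT f y) → ∃! z : T → ℂ, f = fz z) ∧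
    -- it is additive and multiplicative (convolution ↔ pointwise product), and unital
    (∀ z z' : T → ℂ, fz (z + z') = fz z + fz z') ∧
    (∀ z z' : T → ℂ, fz (z * z') = conv (fz z) (fz z')) ∧
    (fz (fun _ => 1) = fun X => ((Real.sqrt (Fintype.card V) : ℝ) : ℂ) *
      (if X = 0 then 1 else 0)) := by
  classical
  set c : ℂ := ((Real.sqrt (Fintype.card V) : ℝ) : ℂ) with hc
  have hN0 : 0 < (Fintype.card V) := Fintype.card_pos
  have hcc : c * c = ((Fintype.card V : ℕ) : ℂ) := by
    rw [hc, ← Complex.ofReal_mul, Real.mul_self_sqrt (by positivity)]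
    norm_cast
  have hNC : ((Fintype.card V : ℕ) : ℂ) ≠ 0 := by exact_mod_cast hN0.ne'
  have hc0 : c ≠ 0 := by
    intro h
    rw [h, zero_mul] at hcc
    exact hNC hcc.symm
  have h1 : c⁻¹ * c⁻¹ * ((Fintype.card V : ℕ) : ℂ) = 1 := by
    rw [← hcc]; field_simp
  -- key orthogonality relation
  have key : ∀ w : V, (∑ Y : V, ψ (B Y w)) =
      if w = 0 then ((Fintype.card V : ℕ) : ℂ) else 0 := by
    intro w
    by_cases hw : w = 0
    · simp [hw]
    · simp only [hw, if_false]
      obtain ⟨a, ha⟩ := AddChar.ne_one_iff.mp hψ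
      have hBw : ∃ y, B y w ≠ 0 := by
        by_contra h
        push_neg at h
        exact hw (hnd w (fun y => (hsymm w y).trans (h y)))
      obtain ⟨y0, hy0⟩ := hBw
      let φ : AddChar V ℂ := ψ.compAddMonoidHom
        { toFun := fun y => B y w
          map_zero' := by simp
          map_add' := by intro x y; simp }
      have hφ : φ ≠ 0 := by
        rw [AddChar.ne_zero_iff]
        refine ⟨(a * (B y0 w)⁻¹) • y0, ?_⟩
        show ψ (B ((a * (B y0 w)⁻¹) • y0) w) ≠ 1
        rw [LinearMap.map_smul₂, smul_eq_mul, mul_assoc, inv_mul_cancel₀ hy0, mul_one]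
        exact ha
      have := AddChar.sum_eq_zero_iff_ne_zero.mpr hφ
      simpa [φ] using this
  have hmulψ : ∀ a b : F, ψ (a + b) = ψ a * ψ b := fun a b => ψ.map_add_eq_mul a b
  -- Fourier inversion: FT ∘ FT is negation
  have hFT2 : ∀ (f : V → ℂ) (X : V), FT (FT f) X = f (-X) := by
    intro f X
    rw [hFT]
    have step : ∀ Y : V, ψ (B X Y) * FT f Y
        = c⁻¹ * ∑ Z : V, ψ (B Y (X + Z)) * f Z := by
      intro Y
      rw [hFT f Y, mul_left_comm, Finset.mul_sum Finset.univ (fun Z => ψ (B Y Z) * f Z) (ψ (B X Y))]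
      congr 1
      refine Finset.sum_congr rfl fun Z _ => ?_
      rw [← mul_assoc, ← hmulψ, hsymm X Y]
      exact congrArg (fun a => ψ a * f Z) (map_add (B Y) X Z).symm
    calc c⁻¹ * ∑ Y : V, ψ (B X Y) * FT f Y
        = c⁻¹ * ∑ Y : V, c⁻¹ * ∑ Z : V, ψ (B Y (X + Z)) * f Z := by
          congr 1
          exact Finset.sum_congr rfl fun Y _ => step Y
      _ = c⁻¹ * (c⁻¹ * ∑ Y : V, ∑ Z : V, ψ (B Y (X + Z)) * f Z) := by
          rw [Finset.mul_sum Finset.univ (fun Y => ∑ Z : V, ψ (B Y (X + Z)) * f Z) c⁻¹]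
      _ = c⁻¹ * (c⁻¹ * ∑ Z : V, (∑ Y : V, ψ (B Y (X + Z))) * f Z) := by
          rw [Finset.sum_comm]
          congr 2
          exact Finset.sum_congr rfl fun Z _ => (Finset.sum_mul _ _ _).symm
      _ = c⁻¹ * (c⁻¹ * (((Fintype.card V : ℕ) : ℂ) * f (-X))) := by
          congr 2
          rw [Finset.sum_eq_single (-X)]
          · rw [key, if_pos (by simp)]
          · intro Z _ hZ
            rw [key, if_neg (fun h => hZ (eq_neg_of_add_eq_zero_right h)), zero_mul]
          · intro h; exact absurd (Finset.mem_univ _) h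
      _ = f (-X) := by
          rw [← mul_assoc, ← mul_assoc, h1, one_mul]
  have hFTinj : Function.Injective FT := by
    intro f g h
    funext X
    have := congrArg (fun u => FT u (-X)) h
    simpa [hFT2] using this
  -- FT of fz
  have hFTfz : ∀ (z : T → ℂ) (x : V), FT (fz z) x = z (χ (-x)) := by
    intro z x
    rw [hfz, hFT2]
  refine ⟨?_, ?_, ?_, ?_, ?_⟩
  · intro z x y hxy
    rw [hFTfz, hFTfz, hχneg x y hxy]
  · intro f hst
    refine ⟨fun t => FT f (-(hχsurj t).choose), ?_, ?_⟩
    · apply hFTinj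
      funext x
      rw [hFTfz]
      have hv : χ (hχsurj (χ (-x))).choose = χ (-x) := (hχsurj (χ (-x))).choose_spec
      have : χ (-(hχsurj (χ (-x))).choose) = χ x := by
        have := hχneg _ _ hv
        rwa [neg_neg] at this
      exact (hst _ _ this).symm
    · intro z' hz'
      funext t
      have hv : χ (hχsurj t).choose = t := (hχsurj t).choose_spec
      have : FT f (-(hχsurj t).choose) = z' (χ (-(-(hχsurj t).choose))) := by
        rw [hz', hFTfz]
      rw [this, neg_neg, hv]
  · intro z z'
    funext X
    simp only [hfz, Pi.add_apply]
    rw [hFT, hFT, hFT, ← mul_add, ← Finset.sum_add_distrib]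
    congr 1
    refine Finset.sum_congr rfl fun Y _ => ?_
    simp [mul_add]
  · intro z z'
    funext X
    rw [hfz, hfz, hfz, hconv]
    set g : V → ℂ := fun v => z (χ v) with hg
    set g' : V → ℂ := fun v => z' (χ v) with hg'
    have lhs : FT (fun v => (z * z') (χ v)) X = c⁻¹ * ∑ A : V, ψ (B X A) * (g A * g' A) := by
      rw [hFT]
      refine congrArg (fun s => c⁻¹ * s) (Finset.sum_congr rfl fun A _ => ?_)
      simp [g, g']
    rw [lhs]
    have step : ∀ Y : V, FT g (X - Y) * FT g' Y
        = c⁻¹ * c⁻¹ * ∑ A : V, ∑ Bb : V, ψ (B X A) * ψ (B Y (Bb - A)) * (g A * g' Bb) := by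
      intro Y
      rw [hFT, hFT, mul_mul_mul_comm, Finset.sum_mul_sum]
      refine congrArg (fun s => c⁻¹ * c⁻¹ * s) ?_
      refine Finset.sum_congr rfl fun A _ => Finset.sum_congr rfl fun Bb _ => ?_
      have harg : B (X - Y) A + B Y Bb = B X A + B Y (Bb - A) := by
        rw [map_sub, LinearMap.sub_apply, map_sub]; ring
      calc ψ (B (X - Y) A) * g A * (ψ (B Y Bb) * g' Bb)
          = ψ (B (X - Y) A) * ψ (B Y Bb) * (g A * g' Bb) := by ring
        _ = ψ (B (X - Y) A + B Y Bb) * (g A * g' Bb) := by rw [hmulψ]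
        _ = ψ (B X A + B Y (Bb - A)) * (g A * g' Bb) := by rw [harg]
        _ = ψ (B X A) * ψ (B Y (Bb - A)) * (g A * g' Bb) := by rw [hmulψ]
    have inner : ∀ A : V, (∑ Bb : V, (∑ Y : V, ψ (B Y (Bb - A))) * (ψ (B X A) * (g A * g' Bb)))
        = ((Fintype.card V : ℕ) : ℂ) * (ψ (B X A) * (g A * g' A)) := by
      intro A
      rw [Finset.sum_eq_single A]
      · rw [key, if_pos (sub_self A)]
      · intro Bb _ hBb
        rw [key, if_neg (sub_ne_zero_of_ne hBb), zero_mul]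
      · intro h; exact absurd (Finset.mem_univ _) h
    have swap : ∀ A Bb : V, (∑ Y : V, ψ (B X A) * ψ (B Y (Bb - A)) * (g A * g' Bb))
        = (∑ Y : V, ψ (B Y (Bb - A))) * (ψ (B X A) * (g A * g' Bb)) := by
      intro A Bb
      rw [Finset.sum_mul]
      exact Finset.sum_congr rfl fun Y _ => by ring
    have main : (∑ Y : V, FT g (X - Y) * FT g' Y) = ∑ A : V, ψ (B X A) * (g A * g' A) := by
      calc ∑ Y : V, FT g (X - Y) * FT g' Y
          = ∑ Y : V, c⁻¹ * c⁻¹ *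
              ∑ A : V, ∑ Bb : V, ψ (B X A) * ψ (B Y (Bb - A)) * (g A * g' Bb) :=
            Finset.sum_congr rfl fun Y _ => step Y
        _ = c⁻¹ * c⁻¹ *
              ∑ Y : V, ∑ A : V, ∑ Bb : V, ψ (B X A) * ψ (B Y (Bb - A)) * (g A * g' Bb) := by
            rw [Finset.mul_sum]
        _ = c⁻¹ * c⁻¹ *
              ∑ A : V, ∑ Bb : V, (∑ Y : V, ψ (B Y (Bb - A))) * (ψ (B X A) * (g A * g' Bb)) := by
            rw [Finset.sum_comm]
            congr 1
            refine Finset.sum_congr rfl fun A _ => ?_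
            rw [Finset.sum_comm]
            exact Finset.sum_congr rfl fun Bb _ => swap A Bb
        _ = c⁻¹ * c⁻¹ *
              ∑ A : V, ((Fintype.card V : ℕ) : ℂ) * (ψ (B X A) * (g A * g' A)) := by
            congr 1
            exact Finset.sum_congr rfl fun A _ => inner A
        _ = c⁻¹ * c⁻¹ * (((Fintype.card V : ℕ) : ℂ) *
              ∑ A : V, ψ (B X A) * (g A * g' A)) := by
            rw [← Finset.mul_sum]
        _ = ∑ A : V, ψ (B X A) * (g A * g' A) := by
            rw [← mul_assoc, h1, one_mul]
    rw [main]
  · funext X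
    rw [hfz, hFT]
    have : ∀ Y : V, ψ (B X Y) * (1 : ℂ) = ψ (B Y X) := by
      intro Y; rw [mul_one, hsymm]
    rw [Finset.sum_congr rfl fun Y _ => this Y, key X]
    split_ifs with h
    · rw [mul_one]
      field_simp
      rw [← hcc]
      ring
    · rw [mul_zero, mul_zero]
end

section
/- Let g be a reductive Lie algebra over F̄_q with Frobenius F and Chevalley map χ : g^F → (t//W)^F. The Fourier transform FT_g induces a direct sum decomposition C(g^F) = ⊕_{θ ∈ (t//W)^F} C(g^F)_θ, where C(g^F)_θ = {h : FT_g(h) is supported on χ^{-1}(θ)}, and a G^F-invariant function f is stable if and only if for each θ there is a constant c_θ with f ⋆ h = c_θ · h for all h ∈ C(g^F)_θ. -/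
open scoped BigOperators

/-- The Fourier transform induces a decomposition
`C(g^F) = ⊕_θ C(g^F)_θ`, where `C(g^F)_θ` consists of the invariant functions `h`
with `FT h` supported on `χ⁻¹(θ)`, and an invariant function `f` is stable iff for
each `θ` there is a constant `c_θ` with `f ⋆ h = c_θ • h` for all `h ∈ C(g^F)_θ`.
Here `V` models `g^F` with nondegenerate invariant symmetric form `B`,
`Γ` models `G^F` acting on `V` preserving `B` and the Chevalley map `χ : V → T`,
with `T` modelling `(t//W)^F`. -/
theorem stmt16 {F V T Γ : Type*} [Field F] [Fintype F] [AddCommGroup V] [Module F V]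
    [Fintype V] [FiniteDimensional F V] [Fintype T]
    [Group Γ] [DistribMulAction Γ V]
    (ψ : AddChar F ℂ) (hψ : ψ ≠ 1)
    (B : V →ₗ[F] V →ₗ[F] F)
    (hsymm : ∀ x y : V, B x y = B y x)
    (hnd : ∀ x : V, (∀ y : V, B x y = 0) → x = 0)
    (hBΓ : ∀ (γ : Γ) (x y : V), B (γ • x) (γ • y) = B x y)
    (χ : V → T)
    (hχΓ : ∀ (γ : Γ) (x : V), χ (γ • x) = χ x)
    (FT : (V → ℂ) → (V → ℂ))
    (hFT : ∀ (f : V → ℂ) (X : V),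
      FT f X = ((Real.sqrt (Fintype.card V) : ℝ) : ℂ)⁻¹ * ∑ Y : V, ψ (B X Y) * f Y)
    (conv : (V → ℂ) → (V → ℂ) → (V → ℂ))
    (hconv : ∀ (f f' : V → ℂ) (X : V),
      conv f f' X = ((Real.sqrt (Fintype.card V) : ℝ) : ℂ)⁻¹ * ∑ Y : V, f (X - Y) * f' Y) :
    -- (1) the direct sum decomposition C(g^F) = ⊕_θ C(g^F)_θ
    (∀ f : V → ℂ, (∀ (γ : Γ) (x : V), f (γ • x) = f x) →
      ∃! c : T → (V → ℂ),
        (∀ θ : T, (∀ (γ : Γ) (x : V), c θ (γ • x) = c θ x) ∧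
          (∀ x : V, χ x ≠ θ → FT (c θ) x = 0)) ∧
        f = ∑ θ : T, c θ) ∧
    -- (2) stability criterion via convolution on the pieces
    (∀ f : V → ℂ, (∀ (γ : Γ) (x : V), f (γ • x) = f x) →
      ((∀ x y : V, χ x = χ y → FT f x = FT f y) ↔
        (∀ θ : T, ∃ cθ : ℂ, ∀ h : V → ℂ,
          (∀ (γ : Γ) (x : V), h (γ • x) = h x) →
          (∀ x : V, χ x ≠ θ → FT h x = 0) →
          conv f h = cθ • h))) := by
  classical
  set K : ℂ := ((Real.sqrt (Fintype.card V) : ℝ) : ℂ)⁻¹ with hKdef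
  have hcardpos : (0:ℝ) < (Fintype.card V : ℝ) := by
    have : 0 < Fintype.card V := Fintype.card_pos
    exact_mod_cast this
  have hsq : (Real.sqrt (Fintype.card V)) * (Real.sqrt (Fintype.card V))
      = (Fintype.card V : ℝ) := Real.mul_self_sqrt hcardpos.le
  have hKN : K * K * (Fintype.card V : ℂ) = 1 := by
    have h1 : ((Real.sqrt (Fintype.card V) : ℝ) : ℂ) * ((Real.sqrt (Fintype.card V) : ℝ) : ℂ)
        = (Fintype.card V : ℂ) := by
      rw [← Complex.ofReal_mul, hsq]; norm_cast
    rw [hKdef, ← mul_inv, h1]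
    exact inv_mul_cancel₀ (by exact_mod_cast hcardpos.ne')
  -- character sum
  have hchar : ∀ W : V, ∑ Y : V, ψ (B Y W) = if W = 0 then (Fintype.card V : ℂ) else 0 := by
    intro W
    by_cases hW : W = 0
    · subst hW
      simp [Finset.card_univ]
    · rw [if_neg hW]
      obtain ⟨a, ha⟩ := AddChar.ne_one_iff.1 hψ
      obtain ⟨y, hy⟩ : ∃ y, B W y ≠ 0 := by
        by_contra hcon; push_neg at hcon; exact hW (hnd W hcon)
      have hyW : B y W ≠ 0 := by rw [hsymm]; exact hy
      set φ : AddChar V ℂ := ψ.compAddMonoidHom (B.flip W).toAddMonoidHom with hφ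
      have hφne : φ ≠ 0 := by
        rw [AddChar.ne_zero_iff]
        refine ⟨(a / B y W) • y, ?_⟩
        have hBval : B ((a / B y W) • y) W = a := by
          rw [map_smul, LinearMap.smul_apply, smul_eq_mul, div_mul_cancel₀ _ hyW]
        have hφv : φ ((a / B y W) • y) = ψ (B ((a / B y W) • y) W) := rfl
        rw [hφv, hBval]
        exact ha
      have hz := AddChar.sum_eq_zero_iff_ne_zero.2 hφne
      simpa [hφ, LinearMap.flip_apply] using hz
  -- Fourier inversion
  have hFT2 : ∀ (f : V → ℂ) (x : V), FT (FT f) x = f (-x) := by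
    intro f x
    rw [hFT]
    have step : ∀ Y : V, ψ (B x Y) * (FT f Y) = ∑ Z : V, K * (ψ (B Y (x + Z)) * f Z) := by
      intro Y
      rw [hFT, Finset.mul_sum, Finset.mul_sum]
      refine Finset.sum_congr rfl fun Z _ => ?_
      rw [map_add, AddChar.map_add_eq_mul, hsymm x Y]
      ring
    rw [Finset.sum_congr rfl fun Y _ => step Y, Finset.sum_comm]
    have h2 : ∀ Z : V, (∑ Y : V, K * (ψ (B Y (x + Z)) * f Z))
        = (if Z = -x then K * ((Fintype.card V : ℂ) * f Z) else 0) := by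
      intro Z
      rw [← Finset.mul_sum, ← Finset.sum_mul, hchar]
      by_cases hZ : Z = -x
      · subst hZ; simp
      · rw [if_neg (fun h0 => hZ (eq_neg_of_add_eq_zero_right h0)), if_neg hZ,
          zero_mul, mul_zero]
    rw [Finset.sum_congr rfl fun Z _ => h2 Z, Finset.sum_ite_eq' Finset.univ (-x)]
    rw [if_pos (Finset.mem_univ _), ← mul_assoc, ← mul_assoc, hKN, one_mul]
  have hFTinj : ∀ f g : V → ℂ, FT f = FT g → f = g := by
    intro f g h
    funext x
    have h1 : FT (FT f) (-x) = FT (FT g) (-x) := by rw [h]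
    rw [hFT2, hFT2, neg_neg] at h1
    exact h1
  -- FT of a finite sum
  have hFTsum : ∀ (c : T → V → ℂ) (x : V), FT (∑ θ : T, c θ) x = ∑ θ : T, FT (c θ) x := by
    intro c x
    rw [hFT]
    simp only [Finset.sum_apply]
    have e1 : ∀ Y : V, ψ (B x Y) * ∑ θ : T, c θ Y = ∑ θ : T, ψ (B x Y) * c θ Y :=
      fun Y => Finset.mul_sum _ _ _
    rw [Finset.sum_congr rfl fun Y _ => e1 Y, Finset.sum_comm, Finset.mul_sum]
    exact Finset.sum_congr rfl fun θ _ => (hFT (c θ) x).symm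
  -- FT of a scalar multiple
  have hFTsmul : ∀ (a : ℂ) (h : V → ℂ) (x : V), FT (a • h) x = a * FT h x := by
    intro a h x
    rw [hFT, hFT, Finset.mul_sum, Finset.mul_sum, Finset.mul_sum]
    refine Finset.sum_congr rfl fun Y _ => ?_
    simp only [Pi.smul_apply, smul_eq_mul]
    ring
  have hFT0 : ∀ x : V, FT (fun _ => (0:ℂ)) x = 0 := by
    intro x; rw [hFT]; simp
  -- FT preserves Γ-invariance
  have hFTG : ∀ (f : V → ℂ), (∀ (γ : Γ) (x : V), f (γ • x) = f x) →
      ∀ (γ : Γ) (x : V), FT f (γ • x) = FT f x := by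
    intro f hf γ x
    rw [hFT, hFT]
    congr 1
    rw [← Equiv.sum_comp (MulAction.toPerm γ) (fun Y => ψ (B (γ • x) Y) * f Y)]
    refine Finset.sum_congr rfl fun Z _ => ?_
    simp only [MulAction.toPerm_apply]
    rw [hBΓ, hf]
  -- inverse Fourier transform
  set Finv : (V → ℂ) → (V → ℂ) := fun g x => FT g (-x) with hFinvdef
  have hFT_Finv : ∀ g : V → ℂ, FT (Finv g) = g := by
    intro g
    funext x
    rw [hFT]
    simp only [hFinvdef]
    have hre : ∑ Y : V, ψ (B x Y) * FT g (-Y) = ∑ Y : V, ψ (B (-x) Y) * FT g Y := by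
      rw [← Equiv.sum_comp (Equiv.neg V) (fun Y => ψ (B (-x) Y) * FT g Y)]
      refine Finset.sum_congr rfl fun Y _ => ?_
      simp only [Equiv.neg_apply]
      have hBneg : (B (-x)) (-Y) = (B x) Y := by simp
      rw [hBneg]
    rw [hre, ← hFT, hFT2, neg_neg]
  have hFinvG : ∀ g : V → ℂ, (∀ (γ : Γ) (x : V), g (γ • x) = g x) →
      ∀ (γ : Γ) (x : V), Finv g (γ • x) = Finv g x := by
    intro g hg γ x
    simp only [hFinvdef]
    rw [show -(γ • x) = γ • (-x) from (smul_neg γ x).symm, hFTG g hg γ (-x)]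
  -- convolution theorem
  have hconvFT : ∀ (f h : V → ℂ) (x : V), FT (conv f h) x = FT f x * FT h x := by
    intro f h x
    rw [hFT (conv f h), hFT f, hFT h]
    simp_rw [hconv]
    have core : (∑ Z : V, ψ (B x Z) * (K * ∑ Y : V, f (Z - Y) * h Y))
        = (∑ W : V, ψ (B x W) * f W) * (K * ∑ Y : V, ψ (B x Y) * h Y) := by
      rw [Finset.mul_sum, Finset.sum_mul_sum]
      simp_rw [Finset.mul_sum]
      rw [Finset.sum_comm]
      conv_rhs => rw [Finset.sum_comm]
      refine Finset.sum_congr rfl fun Y _ => ?_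
      rw [← Equiv.sum_comp (Equiv.addRight Y)
        (fun Z => ψ (B x Z) * (K * (f (Z - Y) * h Y)))]
      refine Finset.sum_congr rfl fun W _ => ?_
      simp only [Equiv.coe_addRight, add_sub_cancel_right]
      rw [map_add, AddChar.map_add_eq_mul]
      ring
    rw [core, ← mul_assoc, mul_comm K, mul_assoc]
  -- orbit membership invariance
  have horb : ∀ (z : V) (γ : Γ) (v : V),
      γ • v ∈ MulAction.orbit Γ z ↔ v ∈ MulAction.orbit Γ z := by
    intro z γ v
    simp only [MulAction.mem_orbit_iff]
    constructor
    · rintro ⟨g, hg⟩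
      exact ⟨γ⁻¹ * g, by rw [mul_smul, hg, inv_smul_smul]⟩
    · rintro ⟨g, hg⟩
      exact ⟨γ * g, by rw [mul_smul, hg]⟩
  constructor
  · -- Part (1)
    intro f hf
    refine ⟨fun θ => Finv (fun x => if χ x = θ then FT f x else 0), ⟨fun θ => ⟨?_, ?_⟩, ?_⟩, ?_⟩
    · -- invariance
      intro γ x
      refine hFinvG _ ?_ γ x
      intro γ' x'
      simp only [hχΓ γ' x', hFTG f hf γ' x']
    · -- support
      intro x hx
      rw [hFT_Finv]
      simp only [if_neg hx]
    · -- sum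
      apply hFTinj
      funext x
      rw [hFTsum]
      have hc : ∀ θ : T, FT (Finv (fun y => if χ y = θ then FT f y else 0)) x
          = if χ x = θ then FT f x else 0 := by
        intro θ; rw [hFT_Finv]
      rw [Finset.sum_congr rfl fun θ _ => hc θ, Finset.sum_ite_eq]
      simp
    · -- uniqueness
      rintro c' ⟨hc'1, hc'2⟩
      funext θ
      apply hFTinj
      funext x
      rw [hFT_Finv]
      by_cases hx : χ x = θ
      · rw [if_pos hx]
        have hsum : FT f x = ∑ θ' : T, FT (c' θ') x := by
          conv_lhs => rw [hc'2]
          rw [hFTsum]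
        have hsingle : ∑ θ' : T, FT (c' θ') x = FT (c' θ) x := by
          refine Finset.sum_eq_single θ (fun θ' _ hne => (hc'1 θ').2 x ?_)
            (fun h => absurd (Finset.mem_univ θ) h)
          rw [hx]; exact fun hh => hne hh.symm
        rw [← hsingle, ← hsum]
      · rw [if_neg hx]
        exact (hc'1 θ).2 x hx
  · -- Part (2)
    intro f hf
    constructor
    · -- stable → eigen-constants
      intro hstab θ
      by_cases hfib : ∃ x₀ : V, χ x₀ = θ
      · obtain ⟨x₀, hx₀⟩ := hfib
        refine ⟨FT f x₀, fun h hinv hsupp => ?_⟩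
        apply hFTinj
        funext x
        rw [hconvFT, hFTsmul]
        by_cases hx : χ x = θ
        · rw [hstab x x₀ (by rw [hx, hx₀])]
        · rw [hsupp x hx, mul_zero, mul_zero]
      · push_neg at hfib
        refine ⟨0, fun h hinv hsupp => ?_⟩
        have hh : h = fun _ => 0 := by
          apply hFTinj
          funext x
          rw [hsupp x (hfib x), hFT0]
        rw [hh]
        funext x
        rw [hconv]
        simp
    · -- eigen-constants → stable
      intro hc x y hxy
      obtain ⟨cθ, hcθ⟩ := hc (χ x)
      have key : ∀ z : V, χ z = χ x → FT f z = cθ := by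
        intro z hz
        set g : V → ℂ := fun v => if v ∈ MulAction.orbit Γ z then (1:ℂ) else 0 with hg
        have hginv : ∀ (γ : Γ) (v : V), g (γ • v) = g v := by
          intro γ v
          simp only [hg, horb]
        have hgsupp : ∀ v : V, χ v ≠ χ x → FT (Finv g) v = 0 := by
          intro v hv
          rw [hFT_Finv]
          simp only [hg]
          rw [if_neg]
          rintro ⟨γ, hγ⟩
          exact hv (by rw [← hγ, hχΓ, hz])
        have heq := hcθ (Finv g) (hFinvG g hginv) hgsupp
        have h2 : FT (conv f (Finv g)) z = FT (cθ • Finv g) z := by rw [heq]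
        rw [hconvFT, hFTsmul, hFT_Finv] at h2
        have hz1 : g z = 1 := by
          simp only [hg]
          rw [if_pos ⟨1, one_smul Γ z⟩]
        rw [hz1, mul_one, mul_one] at h2
        exact h2
      rw [key x rfl, key y hxy.symm]
end
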